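/- For the dressing action of H̃ on G̃, the orbit through a point (p₀,q₀,r,s₀) with r ≠ 0 is exactly the set {(a, b, r, s - a·b/η_λ(r)) : (a,b) ∈ ℝ²ⁿ}, where s = s₀ + p₀·q₀/η_λ(r); in particular, the quantity s + (p·q)/η_λ(r) is invariant along the orbit. -/
import Mathlib


noncomputable section

/-- The standard inner product on `ℝⁿ`. -/
def beta {n : ℕ} (x y : Fin n → ℝ) : ℝ := ∑ i, x i * y i

/-- `η_λ(r) = (e^{2λr}-1)/(2λ)`. -/
def eta (l r : ℝ) : ℝ := (Real.exp (2 * l * r) - 1) / (2 * l)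

/-- The dressing action of `H̃ = ℝⁿ×ℝⁿ×ℝ×ℝ` on `G̃ = ℝⁿ×ℝⁿ×ℝ×ℝ`:
`(ρ(x,y,z,w))(p,q,r,s) = (eʷp - e^{-λr+w}η_λ(r)y, e⁻ʷq + e^{-λr-w}η_λ(r)x, r,
  s - e^{-λr}p·x + e^{-λr}q·y + e^{-2λr}η_λ(r)β(x,y))`. -/
def rhoHtGt {n : ℕ} (l : ℝ) (h : (Fin n → ℝ) × (Fin n → ℝ) × ℝ × ℝ)
    (g : (Fin n → ℝ) × (Fin n → ℝ) × ℝ × ℝ) :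
    (Fin n → ℝ) × (Fin n → ℝ) × ℝ × ℝ :=
  (Real.exp h.2.2.2 • g.1
      - (Real.exp (-(l * g.2.2.1) + h.2.2.2) * eta l g.2.2.1) • h.2.1,
   Real.exp (-h.2.2.2) • g.2.1
      + (Real.exp (-(l * g.2.2.1) - h.2.2.2) * eta l g.2.2.1) • h.1,
   g.2.2.1,
   g.2.2.2 - Real.exp (-(l * g.2.2.1)) * beta g.1 h.1
     + Real.exp (-(l * g.2.2.1)) * beta g.2.1 h.2.1
     + Real.exp (-(2 * (l * g.2.2.1))) * eta l g.2.2.1 * beta h.1 h.2.1)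

lemma eta_ne_zero {l r : ℝ} (hl : l ≠ 0) (hr : r ≠ 0) : eta l r ≠ 0 := by
  unfold eta
  apply div_ne_zero
  · rw [sub_ne_zero]
    intro h
    have h2 : Real.exp (2*l*r) = Real.exp 0 := by simpa using h
    have := Real.exp_eq_exp.mp h2
    simp only [mul_eq_zero] at this
    rcases this with (h2|h2)|h2 <;> simp_all
  · simpa using hl

lemma beta_sub_left {n : ℕ} (u v w : Fin n → ℝ) : beta (u - v) w = beta u w - beta v w := by
  simp [beta, sub_mul, Finset.sum_sub_distrib]

lemma beta_add_right {n : ℕ} (u v w : Fin n → ℝ) : beta u (v + w) = beta u v + beta u w := by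
  simp [beta, mul_add, Finset.sum_add_distrib]

lemma beta_smul_left {n : ℕ} (c : ℝ) (u v : Fin n → ℝ) : beta (c • u) v = c * beta u v := by
  simp [beta, Finset.mul_sum, mul_assoc]

lemma beta_smul_right {n : ℕ} (c : ℝ) (u v : Fin n → ℝ) : beta u (c • v) = c * beta u v := by
  simp [beta, Finset.mul_sum, mul_comm, mul_left_comm]

lemma beta_comm {n : ℕ} (u v : Fin n → ℝ) : beta u v = beta v u := by
  simp [beta, mul_comm]

lemma inv_key {n : ℕ} (l : ℝ) (hl : l ≠ 0) (r : ℝ) (hr : r ≠ 0)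
    (p₀ q₀ : Fin n → ℝ) (s₀ : ℝ) (h : (Fin n → ℝ) × (Fin n → ℝ) × ℝ × ℝ) :
    (rhoHtGt l h (p₀, q₀, r, s₀)).2.2.2
        + beta (rhoHtGt l h (p₀, q₀, r, s₀)).1
            (rhoHtGt l h (p₀, q₀, r, s₀)).2.1 / eta l r =
      s₀ + beta p₀ q₀ / eta l r := by
  have he := eta_ne_zero hl hr
  have hE := Real.exp_ne_zero (l * r)
  have hW := Real.exp_ne_zero h.2.2.2
  simp only [rhoHtGt, beta_sub_left, beta_add_right, beta_smul_left, beta_smul_right,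
    two_mul, neg_add, Real.exp_add, Real.exp_sub, Real.exp_neg]
  rw [beta_comm h.2.1 q₀, beta_comm h.2.1 h.1]
  field_simp
  ring

/-- The dressing orbit of `H̃` on `G̃` through a point `(p₀,q₀,r,s₀)` with
`r ≠ 0` is exactly `{(a, b, r, s - a·b/η_λ(r)) : (a,b) ∈ ℝ²ⁿ}`, where
`s = s₀ + p₀·q₀/η_λ(r)`; in particular the quantity `s + p·q/η_λ(r)` is
invariant along the orbit. -/
theorem stmt_10 {n : ℕ} (l : ℝ) (hl : l ≠ 0) (r : ℝ) (hr : r ≠ 0)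
    (p₀ q₀ : Fin n → ℝ) (s₀ : ℝ) :
    (∀ w : (Fin n → ℝ) × (Fin n → ℝ) × ℝ × ℝ,
        (∃ h : (Fin n → ℝ) × (Fin n → ℝ) × ℝ × ℝ,
            rhoHtGt l h (p₀, q₀, r, s₀) = w) ↔
          ∃ a b : Fin n → ℝ,
            w = (a, b, r,
              (s₀ + beta p₀ q₀ / eta l r) - beta a b / eta l r)) ∧
    (∀ h : (Fin n → ℝ) × (Fin n → ℝ) × ℝ × ℝ,
        (rhoHtGt l h (p₀, q₀, r, s₀)).2.2.2
            + beta (rhoHtGt l h (p₀, q₀, r, s₀)).1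
                (rhoHtGt l h (p₀, q₀, r, s₀)).2.1 / eta l r =
          s₀ + beta p₀ q₀ / eta l r) := by
  have he := eta_ne_zero hl hr
  constructor
  · intro w
    constructor
    · rintro ⟨h, rfl⟩
      refine ⟨(rhoHtGt l h (p₀,q₀,r,s₀)).1, (rhoHtGt l h (p₀,q₀,r,s₀)).2.1, ?_⟩
      have hinv := inv_key l hl r hr p₀ q₀ s₀ h
      have h4 : (rhoHtGt l h (p₀,q₀,r,s₀)).2.2.2 =
          (s₀ + beta p₀ q₀ / eta l r)
            - beta (rhoHtGt l h (p₀,q₀,r,s₀)).1 (rhoHtGt l h (p₀,q₀,r,s₀)).2.1 / eta l r := by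
        linarith
      exact Prod.ext rfl (Prod.ext rfl (Prod.ext rfl h4))
    · rintro ⟨a, b, rfl⟩
      set hh : (Fin n → ℝ) × (Fin n → ℝ) × ℝ × ℝ :=
        ((Real.exp (l*r) / eta l r) • (b - q₀), (Real.exp (l*r) / eta l r) • (p₀ - a), 0, 0)
        with hhh
      refine ⟨hh, ?_⟩
      have hE := Real.exp_ne_zero (l * r)
      have h1 : (rhoHtGt l hh (p₀,q₀,r,s₀)).1 = a := by
        funext i
        simp only [rhoHtGt, hhh, Pi.smul_apply, Pi.sub_apply, smul_eq_mul, Real.exp_zero,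
          add_zero, Real.exp_neg, one_mul]
        field_simp
        ring
      have h2 : (rhoHtGt l hh (p₀,q₀,r,s₀)).2.1 = b := by
        funext i
        simp only [rhoHtGt, hhh, Pi.smul_apply, Pi.add_apply, Pi.sub_apply, smul_eq_mul,
          Real.exp_zero, neg_zero, sub_zero, Real.exp_neg, one_mul]
        field_simp
        ring
      have hinv := inv_key l hl r hr p₀ q₀ s₀ hh
      rw [h1, h2] at hinv
      have h4 : (rhoHtGt l hh (p₀,q₀,r,s₀)).2.2.2 =
          (s₀ + beta p₀ q₀ / eta l r) - beta a b / eta l r := by linarith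
      exact Prod.ext h1 (Prod.ext h2 (Prod.ext rfl h4))
  · exact inv_key l hl r hr p₀ q₀ s₀
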